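/- The standardization map std, restricted to quasi-Yamanouchi SSOTs, is a bijection from QYOT_n(λ) onto OT_n(λ) which preserves the descent composition and the number of steps; its inverse is the destandardization map dst sending an SSOT to the unique quasi-Yamanouchi SSOT with the same standardization. -/

import Mathlib

open scoped BigOperators Classical

noncomputable section

/-! ### Boxes and strips -/

/-- `boxNE B B'` : the box `B'` lies weakly north and strictly east of the box `B`
(boxes are `(row, column)` pairs). -/
def boxNE (B B' : ℕ × ℕ) : Prop := B'.1 ≤ B.1 ∧ B.2 < B'.2

/-- `HStrip μ ν` : `μ ⊆ ν` and the skew shape `ν \ μ` is a horizontal strip, i.e. it has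
at most one box in every column. -/
def HStrip (μ ν : YoungDiagram) : Prop :=
  μ ≤ ν ∧ ∀ i₁ i₂ j : ℕ, (i₁, j) ∈ ν → (i₁, j) ∉ μ → (i₂, j) ∈ ν → (i₂, j) ∉ μ → i₁ = i₂

/-- `VStrip μ ν` : `μ ⊆ ν` and the skew shape `ν \ μ` is a vertical strip, i.e. it has
at most one box in every row. -/
def VStrip (μ ν : YoungDiagram) : Prop :=
  μ ≤ ν ∧ ∀ i j₁ j₂ : ℕ, (i, j₁) ∈ ν → (i, j₁) ∉ μ → (i, j₂) ∈ ν → (i, j₂) ∉ μ → j₁ = j₂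

/-- `ν` is obtained from `μ` by adding exactly one box. -/
def YCovers (μ ν : YoungDiagram) : Prop := μ ≤ ν ∧ ν.card = μ.card + 1

/-! ### Semistandard oscillating tableaux (SSOT)

An SSOT `S = (S^1, S'^2, S^2, …, S'^k, S^k)` is encoded by the number of steps `k`,
the partitions `A i = S^i` and `D i = S'^i` (with the conventions `A 0 = D 0 = D 1 = ∅`
and `A i = D (i+1) = S^k` for `i ≥ k`, i.e. the sequence is continued by the final
shape forever, and the last step is required to be nontrivial so that the number of
steps is well defined). -/

structure SSOT where
  steps : ℕ
  A : ℕ → YoungDiagram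
  D : ℕ → YoungDiagram
  hA0 : A 0 = ⊥
  hD0 : D 0 = ⊥
  hD1 : D 1 = ⊥
  stableA : ∀ i, steps ≤ i → A i = A steps
  stableD : ∀ i, steps < i → D i = A steps
  strip_del : ∀ i, 1 ≤ i → HStrip (D (i + 1)) (A i)
  strip_add : ∀ i, 2 ≤ i → HStrip (D i) (A i)
  minimal : steps ≠ 0 → ¬(D steps = A steps ∧ A steps = A (steps - 1))

namespace SSOT

/-- The shape of an SSOT. -/
def shape (S : SSOT) : YoungDiagram := S.A S.steps

/-- The multiplicity of the letter `i` in the content `‖S‖`, namely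
`|S^{i-1} \ S'^i| + |S^i \ S'^i|`. -/
def mult (S : SSOT) (i : ℕ) : ℕ :=
  if i = 0 then 0 else ((S.A (i - 1)).card - (S.D i).card) + ((S.A i).card - (S.D i).card)

/-- The length of an SSOT. -/
def length (S : SSOT) : ℕ := ∑ i ∈ Finset.range (S.steps + 1), S.mult i

/-- The weight of an SSOT, as a finitely supported exponent vector; the variable with
index `j` records the letter `j + 1`. -/
def wt (S : SSOT) : ℕ →₀ ℕ := ∑ i ∈ Finset.range S.steps, Finsupp.single i (S.mult (i + 1))

/-- `com S` : the weight vector of the profile of `S`, as a weak composition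
(the `i`-th entry is the number of letters equal to `i+1` in the profile). -/
def comList (S : SSOT) : List ℕ := (List.range S.steps).map fun i => S.mult (i + 1)

/-- `cum S i` : the position in the profile of `S` after all letters `≤ i`. -/
def cum (S : SSOT) (i : ℕ) : ℕ := ∑ j ∈ Finset.range (i + 1), S.mult j

/-- number of deletion substeps of step `i`, namely `|S^{i-1} \ S'^i|`. -/
def delc (S : SSOT) (i : ℕ) : ℕ := (S.A (i - 1)).card - (S.D i).card

/-- The letter occupying position `m` (for `1 ≤ m ≤ length`) of the profile of `S`. -/
def letterOf (S : SSOT) (m : ℕ) : ℕ := sInf {i | m ≤ S.cum i}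

end SSOT

/-- The exponent vector associated to a weak composition. -/
def listWt (c : List ℕ) : ℕ →₀ ℕ :=
  ∑ i ∈ Finset.range c.length, Finsupp.single i (c.getD i 0)

/-- The SSOT function `ss_{λ,n}` : the generating function `∑_{S ∈ SSOT_n(λ)} x^S`,
defined coefficientwise. -/
def ssotFun (l : YoungDiagram) (n : ℕ) : MvPowerSeries ℕ ℤ :=
  fun d => (Nat.card {S : SSOT // S.shape = l ∧ S.length = n ∧ S.wt = d} : ℤ)

/-- The SSOT function with rational coefficients. -/
def ssotFunQ (l : YoungDiagram) (n : ℕ) : MvPowerSeries ℕ ℚ :=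
  fun d => (Nat.card {S : SSOT // S.shape = l ∧ S.length = n ∧ S.wt = d} : ℚ)

/-- The SSOT function with complex coefficients. -/
def ssotFunC (l : YoungDiagram) (n : ℕ) : MvPowerSeries ℕ ℂ :=
  fun d => (Nat.card {S : SSOT // S.shape = l ∧ S.length = n ∧ S.wt = d} : ℂ)

/-- The full SSOT function `ss_λ = ∑_n ss_{λ,n}`. -/
def ssotFull (l : YoungDiagram) : MvPowerSeries ℕ ℤ :=
  fun d => (Nat.card {S : SSOT // S.shape = l ∧ S.wt = d} : ℤ)

/-- Setting the variables `x_{k+1} = x_{k+2} = ⋯ = 0` in a power series: only monomials in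
the first `k` variables survive. -/
def restrictVars (k : ℕ) (f : MvPowerSeries ℕ ℤ) : MvPowerSeries ℕ ℤ :=
  fun d => if ∀ i ∈ d.support, i < k then MvPowerSeries.coeff d f else 0

/-! ### Quasisymmetric functions -/

/-- A strong composition: all parts are positive. -/
def StrongComp (a : List ℕ) : Prop := ∀ x ∈ a, 0 < x

/-- `Refines b a` : the parts of `b` can be grouped into consecutive blocks whose sums
are the parts of `a`, in order. -/
def Refines (b a : List ℕ) : Prop :=
  ∃ L : List (List ℕ), L.flatten = b ∧ L.map List.sum = a

/-- The values of a finitely supported exponent vector, listed with variable indices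
increasing. -/
def sortedVals (d : ℕ →₀ ℕ) : List ℕ := (d.support.sort (· ≤ ·)).map fun i => d i

/-- The monomial quasisymmetric function `M_b`. -/
def monQSym (b : List ℕ) : MvPowerSeries ℕ ℤ :=
  fun d => if sortedVals d = b then 1 else 0

/-- Gessel's fundamental quasisymmetric function `F_a = ∑_{b ∈ ref(a)} M_b`. -/
def fundQSym (a : List ℕ) : MvPowerSeries ℕ ℤ :=
  ∑ᶠ b ∈ {b : List ℕ | StrongComp b ∧ Refines b a}, monQSym b

/-! ### Oscillating tableaux and descent compositions -/

/-- An oscillating tableau of shape `l` and length `n` : a sequence of partitions starting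
at `∅`, ending at `l` (where it stays forever), with consecutive terms differing by one box. -/
def IsOT (O : ℕ → YoungDiagram) (n : ℕ) (l : YoungDiagram) : Prop :=
  O 0 = ⊥ ∧ (∀ j, n ≤ j → O j = l) ∧
    ∀ j, j < n → YCovers (O j) (O (j + 1)) ∨ YCovers (O (j + 1)) (O j)

/-- Move `j` (from `O (j-1)` to `O j`) is an addition. -/
def IsAdd (O : ℕ → YoungDiagram) (j : ℕ) : Prop := O (j - 1) ≤ O j

/-- Position `j` is a descent of the oscillating tableau `O` : a maximal
(deletions-then-additions) segment ends at `j`.  This happens exactly when move `j+1` is a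
deletion following an addition, or two consecutive additions break the strictly-increasing
northeast order, or two consecutive deletions break the strictly-decreasing northeast order. -/
def IsDescent (O : ℕ → YoungDiagram) (j : ℕ) : Prop :=
  (IsAdd O j ∧ ¬ IsAdd O (j + 1)) ∨
  (IsAdd O j ∧ IsAdd O (j + 1) ∧
    ∃ B B' : ℕ × ℕ, B ∈ O j ∧ B ∉ O (j - 1) ∧ B' ∈ O (j + 1) ∧ B' ∉ O j ∧ ¬ boxNE B B') ∨
  (¬ IsAdd O j ∧ ¬ IsAdd O (j + 1) ∧
    ∃ B B' : ℕ × ℕ, B ∈ O (j - 1) ∧ B ∉ O j ∧ B' ∈ O j ∧ B' ∉ O (j + 1) ∧ ¬ boxNE B' B)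

/-- The descent set `Des O ⊆ {1, …, n-1}` of an oscillating tableau of length `n`. -/
def DesSet (O : ℕ → YoungDiagram) (n : ℕ) : Finset ℕ :=
  (Finset.Ico 1 n).filter (IsDescent O)

/-- successive differences of a list. -/
def diffs (L : List ℕ) : List ℕ := (L.zip (0 :: L)).map fun p => p.1 - p.2

/-- The descent composition `des O = (d₁ - d₀, …, d_k - d_{k-1})` of an oscillating tableau
of length `n`, where `Des O = {d₁ < ⋯ < d_{k-1}}`, `d₀ = 0` and `d_k = n`. -/
def desComp (O : ℕ → YoungDiagram) (n : ℕ) : List ℕ :=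
  if n = 0 then [] else diffs ((DesSet O n ∪ {n}).sort (· ≤ ·))

/-! ### Standardization -/

/-- `IsStd S O` : the oscillating tableau `O` is the standardization of the SSOT `S`;
the substeps of step `i` of `S` occupy the positions in `(cum S (i-1), cum S i]`,
first the deletions (from `S^{i-1}` down to `S'^i`, boxes strictly decreasing in the
northeast order, i.e. removed from right to left), then the additions (from `S'^i` up to
`S^i`, boxes strictly increasing in the northeast order, i.e. added from left to right). -/
def IsStd (S : SSOT) (O : ℕ → YoungDiagram) : Prop :=
  (∀ j, S.length ≤ j → O j = S.shape) ∧
  (∀ i, O (S.cum i) = S.A i) ∧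
  (∀ i, 1 ≤ i → O (S.cum (i - 1) + S.delc i) = S.D i) ∧
  (∀ i m, 1 ≤ i → S.cum (i - 1) < m → m ≤ S.cum (i - 1) + S.delc i →
    YCovers (O m) (O (m - 1))) ∧
  (∀ i m, 1 ≤ i → S.cum (i - 1) + S.delc i < m → m ≤ S.cum i →
    YCovers (O (m - 1)) (O m)) ∧
  (∀ i m, 1 ≤ i → S.cum (i - 1) < m → m + 1 ≤ S.cum (i - 1) + S.delc i →
    ∀ B B' : ℕ × ℕ, B ∈ O (m - 1) → B ∉ O m → B' ∈ O m → B' ∉ O (m + 1) → boxNE B' B) ∧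
  (∀ i m, 1 ≤ i → S.cum (i - 1) + S.delc i < m → m + 1 ≤ S.cum i →
    ∀ B B' : ℕ × ℕ, B ∈ O m → B ∉ O (m - 1) → B' ∈ O (m + 1) → B' ∉ O m → boxNE B B')

/-- An SSOT is quasi-Yamanouchi if its weight vector equals its descent composition. -/
def IsQY (S : SSOT) : Prop :=
  ∃ O : ℕ → YoungDiagram, IsStd S O ∧ S.comList = desComp O S.length

/-! ### Semistandard Young tableaux, column insertion, the Sundaram construction -/

/-- `f` is (the entry function of) a semistandard Young tableau of shape `μ`, with positive
integer entries: rows weakly increase, columns strictly increase, entries vanish outside `μ`. -/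
def IsSsytOn (μ : YoungDiagram) (f : ℕ → ℕ → ℕ) : Prop :=
  (∀ i j₁ j₂, j₁ ≤ j₂ → (i, j₂) ∈ μ → f i j₁ ≤ f i j₂) ∧
  (∀ i₁ i₂ j, i₁ < i₂ → (i₂, j) ∈ μ → f i₁ j < f i₂ j) ∧
  (∀ i j, (i, j) ∉ μ → f i j = 0) ∧
  (∀ i j, (i, j) ∈ μ → 0 < f i j)

/-- The set of semistandard Young tableaux of shape `l`. -/
def SSYTPos (l : YoungDiagram) := {f : ℕ → ℕ → ℕ // IsSsytOn l f}

/-- `ColIns f μ v g ν` : column-inserting the value `v` into the tableau `f` of shape `μ`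
produces the tableau `g` of shape `ν` (one more box): `v` is inserted in column `0`, where it
replaces the topmost entry `≥ v` (which is bumped into the next column, and so on); in the
final column `cmax` the incoming value is strictly larger than all entries and is appended
at the bottom, creating the new box. -/
def ColIns (f : ℕ → ℕ → ℕ) (μ : YoungDiagram) (v : ℕ) (g : ℕ → ℕ → ℕ) (ν : YoungDiagram) :
    Prop :=
  μ ≤ ν ∧ ν.card = μ.card + 1 ∧
  ∃ (cmax : ℕ) (w rr : ℕ → ℕ),
    w 0 = v ∧
    (∀ j, j < cmax →
      (rr j, j) ∈ μ ∧ w j ≤ f (rr j) j ∧ (∀ i, i < rr j → f i j < w j) ∧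
      w (j + 1) = f (rr j) j ∧ g (rr j) j = w j) ∧
    (∀ i, (i, cmax) ∈ μ → f i cmax < w cmax) ∧
    (rr cmax, cmax) ∉ μ ∧ (rr cmax, cmax) ∈ ν ∧ g (rr cmax) cmax = w cmax ∧
    (∀ i j, ¬(j ≤ cmax ∧ i = rr j) → g i j = f i j)

/-- The Sundaram construction along an SSOT `S` with standardization `O`: a sequence of
semistandard Young tableaux `T m` of shape `O m`; at an addition substep the new box receives
the current letter of `S`; at a deletion substep the entry in the removed box is
column-unbumped, ejecting the value `v m` (equivalently, column-inserting `v m` into `T m`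
recovers `T (m-1)`). -/
def SundaramBuild (S : SSOT) (O : ℕ → YoungDiagram) (T : ℕ → ℕ → ℕ → ℕ) (v : ℕ → ℕ) : Prop :=
  (∀ i j, T 0 i j = 0) ∧
  (∀ m, IsSsytOn (O m) (T m)) ∧
  (∀ m, 1 ≤ m → m ≤ S.length →
    (YCovers (O (m - 1)) (O m) →
      (∀ B : ℕ × ℕ, B ∈ O m → B ∉ O (m - 1) → T m B.1 B.2 = S.letterOf m) ∧
      (∀ i j : ℕ, ((i, j) ∈ O m → (i, j) ∈ O (m - 1)) → T m i j = T (m - 1) i j)) ∧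
    (YCovers (O m) (O (m - 1)) →
      ColIns (T m) (O m) (v m) (T (m - 1)) (O (m - 1))))

/-- A Burge (two-row, lexicographic, column-strict) array, stored as the list of its
columns `(top, bottom)`. -/
structure BurgeArray where
  cols : List (ℕ × ℕ)
  pos : ∀ p ∈ cols, 0 < p.2
  burge : ∀ p ∈ cols, p.2 < p.1
  lex : cols.Chain' fun p q => p.1 < q.1 ∨ (p.1 = q.1 ∧ p.2 ≤ q.2)

/-- The two-row array recorded by the Sundaram construction: the pairs
`(letter, ejected value)` at the deletion substeps, in order. -/
def delList (S : SSOT) (O : ℕ → YoungDiagram) (v : ℕ → ℕ) : List (ℕ × ℕ) :=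
  (((List.range (S.length + 1)).filter fun m =>
      decide (1 ≤ m ∧ YCovers (O m) (O (m - 1))))).map fun m => (S.letterOf m, v m)

/-- The weight of (the entry function of) a tableau of shape `l`; the variable with
index `j` records the entry `j + 1`. -/
def tabWt (l : YoungDiagram) (f : ℕ → ℕ → ℕ) : ℕ →₀ ℕ :=
  ∑ c ∈ l.cells, Finsupp.single (f c.1 c.2 - 1) 1

/-- The Schur function `s_l`, as the generating function of semistandard Young tableaux
of shape `l`, defined coefficientwise. -/
def schur (l : YoungDiagram) : MvPowerSeries ℕ ℤ :=
  fun d => (Nat.card {T : SSYTPos l // tabWt l T.1 = d} : ℤ)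

/-- The Schur function with rational coefficients. -/
def schurQ (l : YoungDiagram) : MvPowerSeries ℕ ℚ :=
  fun d => (Nat.card {T : SSYTPos l // tabWt l T.1 = d} : ℚ)

/-- The expansion of the product `∏_{i<j} (1 - x_i x_j)` : the coefficient of a monomial is
the signed count of the sets of pairs `i < j` summing to its exponent vector. -/
def littlewoodProd : MvPowerSeries ℕ ℤ :=
  fun d => ∑ᶠ F ∈ {F : Finset (ℕ × ℕ) | (∀ p ∈ F, p.1 < p.2) ∧
      (∑ p ∈ F, (Finsupp.single p.1 1 + Finsupp.single p.2 1)) = d},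
    ((-1 : ℤ) ^ F.card)

/-! ### Vertical strip closures, dominance, special shapes -/

/-- Every column of `β` has even length, i.e. the conjugate partition `β'` is even. -/
def EvenConj (β : YoungDiagram) : Prop := ∀ j, Even (β.colLen j)

/-- `VReach μ ν` : `ν` is obtained from `μ` by successively adding vertical strips of even
size. -/
inductive VReach : YoungDiagram → YoungDiagram → Prop
  | refl (μ : YoungDiagram) : VReach μ μ
  | step {μ ν ρ : YoungDiagram} : VReach μ ν → VStrip ν ρ → Even (ρ.card - ν.card) →
      VReach μ ρ

/-- Dominance order: `Dom μ ν` means `ν ≤ μ`, i.e. all partial sums of the parts of `ν`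
are at most those of `μ`. -/
def Dom (μ ν : YoungDiagram) : Prop :=
  ∀ i, ∑ j ∈ Finset.range i, ν.rowLen j ≤ ∑ j ∈ Finset.range i, μ.rowLen j

/-- The square Young diagram with `m` rows of length `m`. -/
def squareYD (m : ℕ) : YoungDiagram where
  cells := Finset.range m ×ˢ Finset.range m
  isLowerSet := by
    rintro ⟨a1, a2⟩ ⟨b1, b2⟩ ⟨h1, h2⟩ ha
    simp only [Finset.coe_product, Set.mem_prod, Finset.mem_coe, Finset.mem_range] at ha ⊢
    omega

/-- The partition `λ̄ = (λ₁ + r, λ₂ + r, λ₃, …, λ_l)`. -/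
def barYD (l : YoungDiagram) (r : ℕ) : YoungDiagram where
  cells :=
    (l.cells.filter fun c => 2 ≤ c.1) ∪
      ({0} : Finset ℕ) ×ˢ Finset.range (l.rowLen 0 + r) ∪
      ({1} : Finset ℕ) ×ˢ Finset.range (l.rowLen 1 + r)
  isLowerSet := by
    have h01 : l.rowLen 1 ≤ l.rowLen 0 := l.rowLen_anti 0 1 (by omega)
    rintro ⟨a1, a2⟩ ⟨b1, b2⟩ ⟨h1, h2⟩ ha
    simp only [Finset.coe_union, Set.mem_union, Finset.mem_coe, Finset.mem_filter,
      Finset.mem_product, Finset.mem_singleton, Finset.mem_range] at ha ⊢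
    rcases ha with ((⟨hmem, hge⟩ | ⟨ha1, ha2⟩) | ⟨ha1, ha2⟩)
    · have hlt : a2 < l.rowLen a1 := YoungDiagram.mem_iff_lt_rowLen.mp
        (by simpa using hmem)
      rcases Nat.lt_or_ge b1 2 with hb | hb
      · have h1a : l.rowLen a1 ≤ l.rowLen 1 := l.rowLen_anti 1 a1 (by omega)
        rcases Nat.lt_or_ge b1 1 with hb0 | hb1
        · exact Or.inl (Or.inr ⟨by omega, by omega⟩)
        · exact Or.inr ⟨by omega, by omega⟩
      · refine Or.inl (Or.inl ⟨?_, by omega⟩)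
        have := l.isLowerSet (a := (a1, a2)) (b := (b1, b2)) ⟨h1, h2⟩ (by simpa using hmem)
        simpa using this
    · exact Or.inl (Or.inr ⟨by omega, by omega⟩)
    · rcases Nat.lt_or_ge b1 1 with hb0 | hb1
      · exact Or.inl (Or.inr ⟨by omega, by omega⟩)
      · exact Or.inr ⟨by omega, by omega⟩

end

noncomputable section StdAux

open SSOT

/-! #### Basic facts about covers -/

lemma yd_le_iff {μ ν : YoungDiagram} : μ ≤ ν ↔ ∀ x : ℕ × ℕ, x ∈ μ → x ∈ ν := Iff.rfl

lemma yd_card_le_of_le {μ ν : YoungDiagram} (h : μ ≤ ν) : μ.card ≤ ν.card :=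
  Finset.card_le_card (YoungDiagram.cells_subset_iff.mpr h)

lemma yd_eq_of_le_of_card_le {μ ν : YoungDiagram} (h : μ ≤ ν) (hc : ν.card ≤ μ.card) :
    μ = ν := by
  ext x
  have := Finset.eq_of_subset_of_card_le (YoungDiagram.cells_subset_iff.mpr h) hc
  rw [this]

lemma ycovers_not_le {μ ν : YoungDiagram} (h : YCovers μ ν) : ¬ ν ≤ μ := by
  intro hle
  have h1 := yd_card_le_of_le hle
  have h2 := h.2
  simp only [YoungDiagram.card] at h1 h2
  omega

lemma ycovers_exists {μ ν : YoungDiagram} (h : YCovers μ ν) :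
    ∃ b : ℕ × ℕ, b ∈ ν ∧ b ∉ μ := by
  by_contra hcon
  push_neg at hcon
  have : ν ≤ μ := fun x hx => hcon x hx
  exact ycovers_not_le h this

lemma ycovers_sdiff_card {μ ν : YoungDiagram} (h : YCovers μ ν) :
    (ν.cells \ μ.cells).card = 1 := by
  rw [Finset.card_sdiff_of_subset (YoungDiagram.cells_subset_iff.mpr h.1)]
  have h2 := h.2
  simp only [YoungDiagram.card] at h2
  omega

lemma ycovers_box_unique {μ ν : YoungDiagram} (h : YCovers μ ν) :
    ∀ x y : ℕ × ℕ, x ∈ ν → x ∉ μ → y ∈ ν → y ∉ μ → x = y := by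
  intro x y hx hx' hy hy'
  have hcard := ycovers_sdiff_card h
  rw [Finset.card_eq_one] at hcard
  obtain ⟨b, hb⟩ := hcard
  have hxb : x ∈ ν.cells \ μ.cells := Finset.mem_sdiff.mpr ⟨hx, hx'⟩
  have hyb : y ∈ ν.cells \ μ.cells := Finset.mem_sdiff.mpr ⟨hy, hy'⟩
  rw [hb, Finset.mem_singleton] at hxb hyb
  rw [hxb, hyb]

lemma ycovers_cells_insert {μ ν : YoungDiagram} (h : YCovers μ ν) {b : ℕ × ℕ}
    (hb : b ∈ ν) (hb' : b ∉ μ) : ν.cells = insert b μ.cells := by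
  apply Finset.eq_of_subset_of_card_le
  · intro x hx
    rw [Finset.mem_insert]
    by_cases hxm : x ∈ μ
    · exact Or.inr hxm
    · exact Or.inl (ycovers_box_unique h x b hx hxm hb hb')
  · rw [Finset.card_insert_of_notMem hb']
    have h2 := h.2
    simp only [YoungDiagram.card] at h2
    omega

lemma ycovers_eq_of_boxes {μ ν₁ ν₂ : YoungDiagram} (h₁ : YCovers μ ν₁) (h₂ : YCovers μ ν₂)
    {b : ℕ × ℕ} (hb₁ : b ∈ ν₁) (hb₁' : b ∉ μ) (hb₂ : b ∈ ν₂) (hb₂' : b ∉ μ) : ν₁ = ν₂ := by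
  ext x
  rw [ycovers_cells_insert h₁ hb₁ hb₁', ycovers_cells_insert h₂ hb₂ hb₂']

lemma ycovers_down_eq_of_boxes {μ₁ μ₂ ν : YoungDiagram} (h₁ : YCovers μ₁ ν) (h₂ : YCovers μ₂ ν)
    {b : ℕ × ℕ} (hb₁ : b ∈ ν) (hb₁' : b ∉ μ₁) (hb₂ : b ∈ ν) (hb₂' : b ∉ μ₂) : μ₁ = μ₂ := by
  ext x
  constructor
  · intro hx
    by_contra hx2
    have hxν : x ∈ ν := h₁.1 hx
    have := ycovers_box_unique h₂ x b hxν hx2 hb₂ hb₂'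
    subst this
    exact hb₁' hx
  · intro hx
    by_contra hx1
    have hxν : x ∈ ν := h₂.1 hx
    have := ycovers_box_unique h₁ x b hxν hx1 hb₁ hb₁'
    subst this
    exact hb₂' hx

/-- First exit time of a box from a decreasing-in-membership sequence. -/
lemma exists_exit {f : ℕ → YoungDiagram} {x : ℕ × ℕ} {a b : ℕ} (hab : a ≤ b)
    (hx : x ∈ f a) (hx' : x ∉ f b) : ∃ t, a < t ∧ t ≤ b ∧ x ∈ f (t - 1) ∧ x ∉ f t := by
  induction b, hab using Nat.le_induction with
  | base => exact absurd hx hx'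
  | succ b hab ih =>
    by_cases hxb : x ∈ f b
    · exact ⟨b + 1, by omega, le_refl _, by simpa using hxb, hx'⟩
    · obtain ⟨t, h1, h2, h3, h4⟩ := ih hxb
      exact ⟨t, h1, by omega, h3, h4⟩

/-- First entry time of a box into a sequence. -/
lemma exists_entry {f : ℕ → YoungDiagram} {x : ℕ × ℕ} {a b : ℕ} (hab : a ≤ b)
    (hx : x ∉ f a) (hx' : x ∈ f b) : ∃ t, a < t ∧ t ≤ b ∧ x ∉ f (t - 1) ∧ x ∈ f t := by
  induction b, hab using Nat.le_induction with
  | base => exact absurd hx' hx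
  | succ b hab ih =>
    by_cases hxb : x ∈ f b
    · obtain ⟨t, h1, h2, h3, h4⟩ := ih hxb
      exact ⟨t, h1, by omega, h3, h4⟩
    · exact ⟨b + 1, by omega, le_refl _, by simpa using hxb, hx'⟩

/-! #### Basic facts about `SSOT` -/

lemma SSOT.mult_zero (S : SSOT) : S.mult 0 = 0 := by simp [SSOT.mult]

lemma SSOT.cum_zero (S : SSOT) : S.cum 0 = 0 := by
  simp [SSOT.cum, SSOT.mult]

lemma SSOT.cum_succ (S : SSOT) (i : ℕ) : S.cum (i + 1) = S.cum i + S.mult (i + 1) := by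
  rw [SSOT.cum, SSOT.cum, Finset.sum_range_succ]

lemma SSOT.cum_mono (S : SSOT) : Monotone S.cum := by
  apply monotone_nat_of_le_succ
  intro i
  rw [S.cum_succ]
  omega

lemma SSOT.cum_steps (S : SSOT) : S.cum S.steps = S.length := rfl

lemma SSOT.delc_le_mult (S : SSOT) (i : ℕ) (hi : 1 ≤ i) : S.delc i ≤ S.mult i := by
  rw [SSOT.delc, SSOT.mult, if_neg (by omega)]
  omega

lemma SSOT.delc_add_le (S : SSOT) (i : ℕ) (hi : 1 ≤ i) :
    S.cum (i - 1) + S.delc i ≤ S.cum i := by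
  obtain ⟨j, rfl⟩ : ∃ j, i = j + 1 := ⟨i - 1, by omega⟩
  have h1 := S.delc_le_mult (j + 1) hi
  have h2 := S.cum_succ j
  simp only [Nat.add_sub_cancel]
  omega

lemma SSOT.mult_stable (S : SSOT) (i : ℕ) (hi : S.steps < i) : S.mult i = 0 := by
  rw [SSOT.mult]
  have h1 : S.A i = S.A S.steps := S.stableA i (by omega)
  have h2 : S.A (i - 1) = S.A S.steps := S.stableA (i - 1) (by omega)
  have h3 : S.D i = S.A S.steps := S.stableD i hi
  rw [if_neg (by omega), h1, h2, h3]
  omega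

lemma SSOT.cum_stable (S : SSOT) (i : ℕ) (hi : S.steps ≤ i) : S.cum i = S.length := by
  induction i, hi using Nat.le_induction with
  | base => exact S.cum_steps
  | succ i hi ih =>
    rw [S.cum_succ, ih, S.mult_stable _ (by omega)]
    omega

/-- Each position `1 ≤ m ≤ S.length` belongs to a segment. -/
lemma SSOT.exists_segment (S : SSOT) {m : ℕ} (hm : 1 ≤ m) (hm' : m ≤ S.length) :
    ∃ i, 1 ≤ i ∧ i ≤ S.steps ∧ S.cum (i - 1) < m ∧ m ≤ S.cum i := by
  have hne : ∃ i, m ≤ S.cum i := ⟨S.steps, by rw [S.cum_steps]; exact hm'⟩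
  set i := Nat.find hne with hidef
  have hi : m ≤ S.cum i := Nat.find_spec hne
  have hi0 : i ≠ 0 := by
    intro h
    rw [h] at hi
    rw [S.cum_zero] at hi
    omega
  have hprev : ¬ m ≤ S.cum (i - 1) := Nat.find_min hne (by omega)
  refine ⟨i, by omega, ?_, by omega, hi⟩
  by_contra hcon
  push_neg at hcon
  have := S.cum_stable (i - 1) (by omega)
  rw [this] at hprev
  omega

/-! #### Consequences of `IsStd` -/

lemma IsStd.del_chain {S : SSOT} {O : ℕ → YoungDiagram} (h : IsStd S O) {i : ℕ} (hi : 1 ≤ i)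
    {t t' : ℕ} (h1 : S.cum (i - 1) ≤ t) (h2 : t ≤ t') (h3 : t' ≤ S.cum (i - 1) + S.delc i) :
    O t' ≤ O t := by
  induction t', h2 using Nat.le_induction with
  | base => exact le_refl _
  | succ t' h2 ih =>
    have hc : YCovers (O (t' + 1)) (O (t' + 1 - 1)) :=
      h.2.2.2.1 i (t' + 1) hi (by omega) h3
    simp only [Nat.add_sub_cancel] at hc
    exact le_trans hc.1 (ih (by omega))

lemma IsStd.add_chain {S : SSOT} {O : ℕ → YoungDiagram} (h : IsStd S O) {i : ℕ} (hi : 1 ≤ i)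
    {t t' : ℕ} (h1 : S.cum (i - 1) + S.delc i ≤ t) (h2 : t ≤ t') (h3 : t' ≤ S.cum i) :
    O t ≤ O t' := by
  induction t', h2 using Nat.le_induction with
  | base => exact le_refl _
  | succ t' h2 ih =>
    have hc : YCovers (O (t' + 1 - 1)) (O (t' + 1)) :=
      h.2.2.2.2.1 i (t' + 1) hi (by omega) h3
    simp only [Nat.add_sub_cancel] at hc
    exact le_trans (ih (by omega)) hc.1

lemma IsStd.isOT {S : SSOT} {O : ℕ → YoungDiagram} (h : IsStd S O) :
    IsOT O S.length S.shape := by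
  refine ⟨?_, h.1, ?_⟩
  · have := h.2.1 0
    rw [S.cum_zero] at this
    rw [this, S.hA0]
  · intro j hj
    obtain ⟨i, hi, _, hm, hm'⟩ := S.exists_segment (m := j + 1) (by omega) (by omega)
    rcases le_or_gt (j + 1) (S.cum (i - 1) + S.delc i) with hdel | hadd
    · right
      have hc := h.2.2.2.1 i (j + 1) hi hm hdel
      simpa using hc
    · left
      have hc := h.2.2.2.2.1 i (j + 1) hi hadd hm'
      simpa using hc

lemma IsStd.del_box_max {S : SSOT} {O : ℕ → YoungDiagram} (h : IsStd S O) {i m : ℕ}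
    (hi : 1 ≤ i) (hm : S.cum (i - 1) < m) (hm' : m ≤ S.cum (i - 1) + S.delc i)
    {b : ℕ × ℕ} (hb : b ∈ O (m - 1)) (hb' : b ∉ O m) :
    ∀ x : ℕ × ℕ, x ∈ O (m - 1) → x ∉ S.D i → x = b ∨ x.2 < b.2 := by
  have later : ∀ t, m < t → t ≤ S.cum (i - 1) + S.delc i →
      ∀ y : ℕ × ℕ, y ∈ O (t - 1) → y ∉ O t → y.2 < b.2 := by
    intro t ht
    induction t, ht using Nat.le_induction with
    | base =>
      intro ht' y hy hy'
      have h6 := h.2.2.2.2.2.1 i m hi hm ht' b y hb hb' (by simpa using hy) hy'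
      exact h6.2
    | succ t ht ih =>
      intro ht' y hy hy'
      have hc : YCovers (O t) (O (t - 1)) := h.2.2.2.1 i t hi (by omega) (by omega)
      obtain ⟨y', hy'1, hy'2⟩ := ycovers_exists hc
      have hy'lt : y'.2 < b.2 := ih (by omega) y' hy'1 hy'2
      have h6 := h.2.2.2.2.2.1 i t hi (by omega) (by omega) y' y hy'1 hy'2
        (by simpa using hy) hy'
      exact lt_trans h6.2 hy'lt
  intro x hx hxD
  by_cases hxm : x ∈ O m
  · have hDm : O (S.cum (i - 1) + S.delc i) = S.D i := by
      have h3 := h.2.2.1 i hi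
      exact h3
    have hxend : x ∉ O (S.cum (i - 1) + S.delc i) := by rw [hDm]; exact hxD
    obtain ⟨t, ht1, ht2, ht3, ht4⟩ := exists_exit (f := O) (a := m) hm' hxm hxend
    exact Or.inr (later t ht1 ht2 x ht3 ht4)
  · have hc : YCovers (O m) (O (m - 1)) := h.2.2.2.1 i m hi hm hm'
    exact Or.inl (ycovers_box_unique hc x b hx hxm hb hb')

lemma IsStd.add_box_min {S : SSOT} {O : ℕ → YoungDiagram} (h : IsStd S O) {i m : ℕ}
    (hi : 1 ≤ i) (hm : S.cum (i - 1) + S.delc i < m) (hm' : m ≤ S.cum i)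
    {b : ℕ × ℕ} (hb : b ∈ O m) (hb' : b ∉ O (m - 1)) :
    ∀ x : ℕ × ℕ, x ∈ S.A i → x ∉ O (m - 1) → x = b ∨ b.2 < x.2 := by
  have later : ∀ t, m < t → t ≤ S.cum i →
      ∀ y : ℕ × ℕ, y ∈ O t → y ∉ O (t - 1) → b.2 < y.2 := by
    intro t ht
    induction t, ht using Nat.le_induction with
    | base =>
      intro ht' y hy hy'
      have h7 := h.2.2.2.2.2.2 i m hi hm ht' b y hb hb' (by simpa using hy)
        (by simpa using hy')
      exact h7.2
    | succ t ht ih =>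
      intro ht' y hy hy'
      have hc : YCovers (O (t - 1)) (O t) := h.2.2.2.2.1 i t hi (by omega) (by omega)
      obtain ⟨y', hy'1, hy'2⟩ := ycovers_exists hc
      have hy'lt : b.2 < y'.2 := ih (by omega) y' hy'1 hy'2
      have h7 := h.2.2.2.2.2.2 i t hi (by omega) (by omega) y' y hy'1 hy'2
        (by simpa using hy) (by simpa using hy')
      exact lt_trans hy'lt h7.2
  intro x hxA hxm
  by_cases hxm' : x ∈ O m
  · have hc : YCovers (O (m - 1)) (O m) := h.2.2.2.2.1 i m hi hm hm'
    exact Or.inl (ycovers_box_unique hc x b hxm' hxm hb hb')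
  · have hxcum : x ∈ O (S.cum i) := by rw [h.2.1 i]; exact hxA
    obtain ⟨t, ht1, ht2, ht3, ht4⟩ := exists_entry (f := O) (a := m) hm' hxm' hxcum
    exact Or.inr (later t ht1 ht2 x ht4 ht3)

/-- The standardization of an SSOT is unique. -/
lemma isStd_unique {S : SSOT} {O₁ O₂ : ℕ → YoungDiagram} (h₁ : IsStd S O₁)
    (h₂ : IsStd S O₂) : O₁ = O₂ := by
  funext m
  induction m with
  | zero =>
    have e₁ := h₁.2.1 0
    have e₂ := h₂.2.1 0
    rw [S.cum_zero] at e₁ e₂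
    rw [e₁, e₂]
  | succ m ih =>
    rcases le_or_gt (m + 1) S.length with hle | hgt
    · obtain ⟨i, hi, _, hm, hm'⟩ := S.exists_segment (m := m + 1) (by omega) hle
      rcases le_or_gt (m + 1) (S.cum (i - 1) + S.delc i) with hdel | hadd
      · -- deletion move
        have c₁ : YCovers (O₁ (m + 1)) (O₁ m) := by
          simpa using h₁.2.2.2.1 i (m + 1) hi hm hdel
        have c₂ : YCovers (O₂ (m + 1)) (O₂ m) := by
          simpa using h₂.2.2.2.1 i (m + 1) hi hm hdel
        obtain ⟨b₁, hb₁, hb₁'⟩ := ycovers_exists c₁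
        obtain ⟨b₂, hb₂, hb₂'⟩ := ycovers_exists c₂
        have hD₁ : S.D i ≤ O₁ (m + 1) := by
          have := h₁.del_chain hi (t := m + 1) (t' := S.cum (i - 1) + S.delc i)
            (by omega) hdel (le_refl _)
          rw [h₁.2.2.1 i hi] at this
          exact this
        have hD₂ : S.D i ≤ O₂ (m + 1) := by
          have := h₂.del_chain hi (t := m + 1) (t' := S.cum (i - 1) + S.delc i)
            (by omega) hdel (le_refl _)
          rw [h₂.2.2.1 i hi] at this
          exact this
        have hb₁D : b₁ ∉ S.D i := fun hx => hb₁' (hD₁ hx)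
        have hb₂D : b₂ ∉ S.D i := fun hx => hb₂' (hD₂ hx)
        have max₁ := h₁.del_box_max hi hm hdel (b := b₁) (by simpa using hb₁)
          hb₁' b₂ (by simp only [Nat.add_sub_cancel]; rw [ih]; exact hb₂) hb₂D
        have max₂ := h₂.del_box_max hi hm hdel (b := b₂) (by simpa using hb₂)
          hb₂' b₁ (by simp only [Nat.add_sub_cancel]; rw [← ih]; exact hb₁) hb₁D
        have hbb : b₁ = b₂ := by
          rcases max₁ with h' | h'
          · exact h'.symm
          · rcases max₂ with h'' | h''
            · exact h''
            · omega
        rw [← ih] at c₂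
        exact ycovers_down_eq_of_boxes c₁ c₂ hb₁ hb₁' hb₁ (by rw [hbb]; exact hb₂')
      · -- addition move
        have c₁ : YCovers (O₁ m) (O₁ (m + 1)) := by
          simpa using h₁.2.2.2.2.1 i (m + 1) hi hadd hm'
        have c₂ : YCovers (O₂ m) (O₂ (m + 1)) := by
          simpa using h₂.2.2.2.2.1 i (m + 1) hi hadd hm'
        obtain ⟨b₁, hb₁, hb₁'⟩ := ycovers_exists c₁
        obtain ⟨b₂, hb₂, hb₂'⟩ := ycovers_exists c₂
        have hA₁ : O₁ (m + 1) ≤ S.A i := by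
          have := h₁.add_chain hi (t := m + 1) (t' := S.cum i) (by omega) hm' (le_refl _)
          rw [h₁.2.1 i] at this
          exact this
        have hA₂ : O₂ (m + 1) ≤ S.A i := by
          have := h₂.add_chain hi (t := m + 1) (t' := S.cum i) (by omega) hm' (le_refl _)
          rw [h₂.2.1 i] at this
          exact this
        have min₁ := h₁.add_box_min hi hadd hm' (b := b₁) hb₁ (by simpa using hb₁')
          b₂ (hA₂ hb₂) (by simp only [Nat.add_sub_cancel]; rw [ih]; exact hb₂')
        have min₂ := h₂.add_box_min hi hadd hm' (b := b₂) hb₂ (by simpa using hb₂')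
          b₁ (hA₁ hb₁) (by simp only [Nat.add_sub_cancel]; rw [← ih]; exact hb₁')
        have hbb : b₁ = b₂ := by
          rcases min₁ with h' | h'
          · exact h'.symm
          · rcases min₂ with h'' | h''
            · exact h''
            · omega
        rw [← ih] at c₂
        exact ycovers_eq_of_boxes c₁ c₂ hb₁ hb₁' (by rw [hbb]; exact hb₂) hb₁'
    · rw [h₁.1 (m + 1) (by omega), h₂.1 (m + 1) (by omega)]

/-! #### Uniqueness of the quasi-Yamanouchi preimage -/

lemma SSOT.ext' {S₁ S₂ : SSOT} (h1 : S₁.steps = S₂.steps) (h2 : S₁.A = S₂.A)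
    (h3 : S₁.D = S₂.D) : S₁ = S₂ := by
  cases S₁
  cases S₂
  dsimp at h1 h2 h3
  subst h1
  subst h2
  subst h3
  rfl

lemma SSOT.comList_length (S : SSOT) : S.comList.length = S.steps := by
  simp [SSOT.comList]

lemma SSOT.comList_getD (S : SSOT) (j : ℕ) (hj : j < S.steps) :
    S.comList.getD j 0 = S.mult (j + 1) := by
  rw [SSOT.comList, List.getD_eq_getElem?_getD]
  rw [List.getElem?_map, List.getElem?_range hj]
  rfl

lemma qy_unique {S₁ S₂ : SSOT} {O : ℕ → YoungDiagram} (hq₁ : IsQY S₁) (hq₂ : IsQY S₂)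
    (hlen : S₁.length = S₂.length) (h₁ : IsStd S₁ O) (h₂ : IsStd S₂ O) : S₁ = S₂ := by
  obtain ⟨O₁', hstd₁', hcom₁⟩ := hq₁
  obtain ⟨O₂', hstd₂', hcom₂⟩ := hq₂
  have e₁ : O₁' = O := isStd_unique hstd₁' h₁
  have e₂ : O₂' = O := isStd_unique hstd₂' h₂
  rw [e₁] at hcom₁
  rw [e₂] at hcom₂
  rw [hlen] at hcom₁
  have hcomeq : S₁.comList = S₂.comList := by rw [hcom₁, hcom₂]
  have hsteps : S₁.steps = S₂.steps := by
    rw [← S₁.comList_length, ← S₂.comList_length, hcomeq]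
  have hmult : ∀ i, S₁.mult i = S₂.mult i := by
    intro i
    rcases Nat.eq_zero_or_pos i with rfl | hi
    · rw [S₁.mult_zero, S₂.mult_zero]
    · rcases le_or_gt i S₁.steps with hle | hgt
      · have g₁ := S₁.comList_getD (i - 1) (by omega)
        have g₂ := S₂.comList_getD (i - 1) (by omega)
        rw [hcomeq] at g₁
        have : i - 1 + 1 = i := by omega
        rw [this] at g₁ g₂
        rw [← g₁, ← g₂]
      · rw [S₁.mult_stable i hgt, S₂.mult_stable i (by omega)]
  have hcum : ∀ i, S₁.cum i = S₂.cum i := by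
    intro i
    unfold SSOT.cum
    exact Finset.sum_congr rfl fun j _ => hmult j
  have hA : ∀ i, S₁.A i = S₂.A i := by
    intro i
    rw [← h₁.2.1 i, ← h₂.2.1 i, hcum]
  have hdelc : ∀ i, 1 ≤ i → S₁.delc i = S₂.delc i := by
    intro i hi
    by_contra hne
    have key : ∀ (T₁ T₂ : SSOT), IsStd T₁ O → IsStd T₂ O →
        (∀ j, T₁.cum j = T₂.cum j) → T₁.delc i < T₂.delc i → False := by
      intro T₁ T₂ k₁ k₂ kc hlt
      set m := T₁.cum (i - 1) + T₁.delc i + 1 with hm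
      have hle₂ : m ≤ T₂.cum (i - 1) + T₂.delc i := by
        rw [← kc (i - 1)]
        omega
      have hmc : m ≤ T₁.cum i := by
        have := T₂.delc_add_le i hi
        rw [← kc (i - 1), ← kc i] at this
        omega
      have cadd : YCovers (O (m - 1)) (O m) :=
        k₁.2.2.2.2.1 i m hi (by omega) hmc
      have cdel : YCovers (O m) (O (m - 1)) :=
        k₂.2.2.2.1 i m hi (by rw [← kc (i - 1)]; omega) hle₂
      have := ycovers_not_le cadd
      exact this cdel.1
    rcases Nat.lt_or_ge (S₁.delc i) (S₂.delc i) with hlt | hge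
    · exact key S₁ S₂ h₁ h₂ hcum hlt
    · exact key S₂ S₁ h₂ h₁ (fun j => (hcum j).symm) (by omega)
  have hD : ∀ i, S₁.D i = S₂.D i := by
    intro i
    rcases Nat.eq_zero_or_pos i with rfl | hi
    · rw [S₁.hD0, S₂.hD0]
    · rw [← h₁.2.2.1 i hi, ← h₂.2.2.1 i hi, hcum, hdelc i hi]
  exact SSOT.ext' hsteps (funext hA) (funext hD)

/-! #### The descent composition machinery -/

/-- Partial sums of the descent composition. -/
def cumO (O : ℕ → YoungDiagram) (n : ℕ) (i : ℕ) : ℕ := ((desComp O n).take i).sum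

/-- The sorted list of descents together with `n`. -/
def dlst (O : ℕ → YoungDiagram) (n : ℕ) : List ℕ :=
  Finset.sort (DesSet O n ∪ {n}) (· ≤ ·)

lemma HStrip.refl (μ : YoungDiagram) : HStrip μ μ :=
  ⟨le_refl _, fun _ _ _ h h' _ _ => absurd h h'⟩

lemma diffs_length (L : List ℕ) : (diffs L).length = L.length := by
  simp [diffs]

lemma desComp_eq {O : ℕ → YoungDiagram} {n : ℕ} (hn : n ≠ 0) :
    desComp O n = diffs (dlst O n) := by
  rw [desComp, if_neg hn]
  rfl

lemma dlst_sorted (O : ℕ → YoungDiagram) (n : ℕ) : (dlst O n).Pairwise (· < ·) :=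
  (Finset.sortedLT_sort _).pairwise

lemma dlst_mem {O : ℕ → YoungDiagram} {n x : ℕ} :
    x ∈ dlst O n ↔ x ∈ DesSet O n ∨ x = n := by
  rw [dlst, Finset.mem_sort, Finset.mem_union, Finset.mem_singleton]

lemma dlst_mem_le {O : ℕ → YoungDiagram} {n x : ℕ} (hx : x ∈ dlst O n) :
    x ≤ n ∧ (n ≠ 0 → 1 ≤ x) ∧ (x < n → IsDescent O x) := by
  rcases dlst_mem.mp hx with h | rfl
  · rw [DesSet, Finset.mem_filter, Finset.mem_Ico] at h
    exact ⟨by omega, fun _ => h.1.1, fun _ => h.2⟩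
  · exact ⟨le_refl _, fun h => by omega, fun h => absurd h (lt_irrefl _)⟩

lemma dlst_getD_mono {O : ℕ → YoungDiagram} {n : ℕ} {j j' : ℕ} (h : j ≤ j')
    (hj' : j' < (dlst O n).length) : (dlst O n).getD j 0 ≤ (dlst O n).getD j' 0 := by
  rw [List.getD_eq_getElem _ _ (by omega), List.getD_eq_getElem _ _ hj']
  rcases Nat.eq_or_lt_of_le h with rfl | hlt
  · exact le_refl _
  · exact le_of_lt ((dlst_sorted O n).rel_get_of_lt hlt)

lemma dlst_getD_strict {O : ℕ → YoungDiagram} {n : ℕ} {j j' : ℕ} (h : j < j')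
    (hj' : j' < (dlst O n).length) : (dlst O n).getD j 0 < (dlst O n).getD j' 0 := by
  rw [List.getD_eq_getElem _ _ (by omega), List.getD_eq_getElem _ _ hj']
  exact (dlst_sorted O n).rel_get_of_lt h

lemma dlst_length_pos (O : ℕ → YoungDiagram) (n : ℕ) : 0 < (dlst O n).length := by
  have : n ∈ dlst O n := dlst_mem.mpr (Or.inr rfl)
  exact List.length_pos_iff.mpr (List.ne_nil_of_mem this)

lemma dlst_last {O : ℕ → YoungDiagram} {n : ℕ} :
    (dlst O n).getD ((dlst O n).length - 1) 0 = n := by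
  have hmem : n ∈ dlst O n := dlst_mem.mpr (Or.inr rfl)
  obtain ⟨j, hj, hjn⟩ := List.mem_iff_getElem.mp hmem
  have h1 : (dlst O n).getD j 0 = n := by rw [List.getD_eq_getElem _ _ hj]; exact hjn
  have hpos := dlst_length_pos O n
  have h2 := dlst_getD_mono (n := n) (O := O) (show j ≤ (dlst O n).length - 1 by omega)
    (by omega)
  have h3 : (dlst O n).getD ((dlst O n).length - 1) 0 ≤ n := by
    have : (dlst O n).getD ((dlst O n).length - 1) 0 ∈ dlst O n := by
      rw [List.getD_eq_getElem _ _ (by omega)]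
      exact List.getElem_mem _
    exact (dlst_mem_le this).1
  omega

lemma diffs_getD (L : List ℕ) (j : ℕ) (hj : j < L.length) :
    (diffs L).getD j 0 = L.getD j 0 - (0 :: L).getD j 0 := by
  have hj' : j < (diffs L).length := by rw [diffs_length]; exact hj
  have hjz : j < (L.zip (0 :: L)).length := by
    rw [List.length_zip]
    simp only [List.length_cons]
    omega
  rw [List.getD_eq_getElem _ _ hj', List.getD_eq_getElem _ _ hj,
    List.getD_eq_getElem _ _ (show j < (0 :: L).length by simp; omega)]
  show (List.map _ (L.zip (0 :: L)))[j]'(by rw [List.length_map]; exact hjz) = _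
  rw [List.getElem_map, List.getElem_zip]

lemma cumO_zero (O : ℕ → YoungDiagram) (n : ℕ) : cumO O n 0 = 0 := rfl

lemma cumO_succ (O : ℕ → YoungDiagram) (n : ℕ) (i : ℕ) :
    cumO O n (i + 1) = cumO O n i + (desComp O n).getD i 0 := by
  rcases Nat.lt_or_ge i (desComp O n).length with h | h
  · rw [cumO, cumO, List.sum_take_succ _ _ h, List.getD_eq_getElem _ _ h]
  · rw [cumO, cumO, List.take_of_length_le h, List.take_of_length_le (by omega),
      List.getD_eq_default _ _ h]
    omega

lemma cumO_mono (O : ℕ → YoungDiagram) (n : ℕ) : Monotone (cumO O n) := by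
  apply monotone_nat_of_le_succ
  intro i
  rw [cumO_succ]
  omega

lemma cumO_stable (O : ℕ → YoungDiagram) (n : ℕ) {i : ℕ}
    (h : (desComp O n).length ≤ i) : cumO O n i = cumO O n (desComp O n).length := by
  rw [cumO, cumO, List.take_of_length_le h, List.take_of_length_le (le_refl _)]

lemma cumO_stable'' {O : ℕ → YoungDiagram} {n : ℕ} (i : ℕ)
    (h : (desComp O n).length ≤ i) : cumO O n i = cumO O n (desComp O n).length :=
  cumO_stable O n h

lemma cumO_get {O : ℕ → YoungDiagram} {n : ℕ} (hn : n ≠ 0) {j : ℕ}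
    (hj : j < (desComp O n).length) : cumO O n (j + 1) = (dlst O n).getD j 0 := by
  have hlen : (desComp O n).length = (dlst O n).length := by
    rw [desComp_eq hn, diffs_length]
  induction j with
  | zero =>
    rw [cumO_succ, cumO_zero, desComp_eq hn, diffs_getD _ _ (by omega)]
    simp
  | succ j ih =>
    rw [cumO_succ, ih (by omega), desComp_eq hn, diffs_getD _ _ (by omega)]
    have h0 : (0 :: dlst O n).getD (j + 1) 0 = (dlst O n).getD j 0 := rfl
    rw [h0]
    have := dlst_getD_mono (n := n) (O := O) (show j ≤ j + 1 by omega) (by omega)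
    omega

lemma cumO_length {O : ℕ → YoungDiagram} {n : ℕ} :
    cumO O n ((desComp O n).length) = n := by
  rcases Nat.eq_zero_or_pos n with rfl | hn
  · rw [desComp]
    simp [cumO]
  · have hlen : (desComp O n).length = (dlst O n).length := by
      rw [desComp_eq (by omega), diffs_length]
    have hpos := dlst_length_pos O n
    have h1 : (desComp O n).length = ((desComp O n).length - 1) + 1 := by omega
    rw [h1, cumO_get (by omega) (by omega), hlen]
    exact dlst_last

lemma cumO_le {O : ℕ → YoungDiagram} {n : ℕ} (i : ℕ) : cumO O n i ≤ n := by
  rcases Nat.lt_or_ge i (desComp O n).length with h | h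
  · calc cumO O n i ≤ cumO O n (desComp O n).length := cumO_mono O n (by omega)
    _ = n := cumO_length
  · rw [cumO_stable O n h, cumO_length]

lemma cumO_strict {O : ℕ → YoungDiagram} {n : ℕ} {j : ℕ}
    (hj : j < (desComp O n).length) : cumO O n j < cumO O n (j + 1) := by
  have hn : n ≠ 0 := by
    intro h
    subst h
    rw [desComp] at hj
    simp at hj
  have hlen : (desComp O n).length = (dlst O n).length := by
    rw [desComp_eq hn, diffs_length]
  rcases Nat.eq_zero_or_pos j with rfl | hjpos
  · rw [cumO_zero, cumO_get hn hj]
    have : (dlst O n).getD 0 0 ∈ dlst O n := by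
      rw [List.getD_eq_getElem _ _ (by omega)]
      exact List.getElem_mem _
    have := (dlst_mem_le this).2.1 hn
    omega
  · have h1 : j = (j - 1) + 1 := by omega
    rw [h1, cumO_get hn (by omega)]
    rw [← h1, cumO_get hn hj]
    exact dlst_getD_strict (by omega) (by omega)

/-- Interior positions of segments are not descents. -/
lemma interior_not_descent {O : ℕ → YoungDiagram} {n : ℕ} {j m : ℕ}
    (h1 : cumO O n j < m) (h2 : m < cumO O n (j + 1)) : ¬ IsDescent O m := by
  intro hdes
  have hn : n ≠ 0 := by
    intro h
    subst h
    have := cumO_le (O := O) (n := 0) (j + 1)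
    omega
  have hlen : (desComp O n).length = (dlst O n).length := by
    rw [desComp_eq hn, diffs_length]
  have hjk : j < (desComp O n).length := by
    by_contra hc
    push_neg at hc
    have e1 := cumO_stable O n hc
    have e2 := cumO_stable O n (show (desComp O n).length ≤ j + 1 by omega)
    omega
  have hmn : m < n := by
    have := cumO_le (O := O) (n := n) (j + 1)
    omega
  have hmem : m ∈ dlst O n := by
    rw [dlst_mem]
    left
    rw [DesSet, Finset.mem_filter, Finset.mem_Ico]
    exact ⟨⟨by omega, hmn⟩, hdes⟩
  obtain ⟨j', hj', hjm⟩ := List.mem_iff_getElem.mp hmem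
  have hjm' : (dlst O n).getD j' 0 = m := by rw [List.getD_eq_getElem _ _ hj']; exact hjm
  have hup : m < (dlst O n).getD j 0 := by rw [← cumO_get hn hjk]; exact h2
  rcases Nat.lt_or_ge j' j with hlt | hge
  · -- m = L[j'] with j' < j, but m > cumO j ≥ L[j']... need lower bound
    rcases Nat.eq_zero_or_pos j with rfl | hj0
    · omega
    · have : (dlst O n).getD (j - 1) 0 < m := by
        rw [← cumO_get hn (by omega)]
        have : j - 1 + 1 = j := by omega
        rw [this]
        exact h1
      have hmono := dlst_getD_mono (n := n) (O := O) (show j' ≤ j - 1 by omega)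
        (by omega)
      omega
  · have hmono := dlst_getD_mono (n := n) (O := O) hge hj'
    omega

/-! #### Moves of an oscillating tableau along segments -/

lemma move_cover {O : ℕ → YoungDiagram} {n : ℕ} {l : YoungDiagram} (hO : IsOT O n l)
    {m : ℕ} (hm : 1 ≤ m) (hm' : m ≤ n) :
    YCovers (O (m - 1)) (O m) ∨ YCovers (O m) (O (m - 1)) := by
  obtain ⟨j, rfl⟩ : ∃ j, m = j + 1 := ⟨m - 1, by omega⟩
  simpa using hO.2.2 j (by omega)

lemma down_not_isAdd {O : ℕ → YoungDiagram} {m : ℕ}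
    (h : YCovers (O m) (O (m - 1))) : ¬ IsAdd O m :=
  fun hA => ycovers_not_le h hA

lemma up_of_isAdd {O : ℕ → YoungDiagram} {n : ℕ} {l : YoungDiagram} (hO : IsOT O n l)
    {m : ℕ} (hm : 1 ≤ m) (hm' : m ≤ n) (h : IsAdd O m) : YCovers (O (m - 1)) (O m) := by
  rcases move_cover hO hm hm' with hc | hc
  · exact hc
  · exact absurd h (down_not_isAdd hc)

lemma down_of_not_isAdd {O : ℕ → YoungDiagram} {n : ℕ} {l : YoungDiagram} (hO : IsOT O n l)
    {m : ℕ} (hm : 1 ≤ m) (hm' : m ≤ n) (h : ¬ IsAdd O m) :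
    YCovers (O m) (O (m - 1)) := by
  rcases move_cover hO hm hm' with hc | hc
  · exact absurd hc.1 h
  · exact hc

lemma ddE (O : ℕ → YoungDiagram) (n i : ℕ) :
    ∃ t, cumO O n (i - 1) + t = cumO O n i ∨
      (cumO O n (i - 1) + t < cumO O n i ∧ IsAdd O (cumO O n (i - 1) + t + 1)) := by
  refine ⟨cumO O n i - cumO O n (i - 1), Or.inl ?_⟩
  have := cumO_mono O n (show i - 1 ≤ i by omega)
  omega

/-- The number of deletion substeps of segment `i`. -/
def dd (O : ℕ → YoungDiagram) (n i : ℕ) : ℕ := Nat.find (ddE O n i)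

lemma dd_le (O : ℕ → YoungDiagram) (n i : ℕ) :
    cumO O n (i - 1) + dd O n i ≤ cumO O n i := by
  have hdd : dd O n i = Nat.find (ddE O n i) := rfl
  rcases Nat.find_spec (ddE O n i) with h | h
  · omega
  · omega

lemma dd_zero {O : ℕ → YoungDiagram} {n i : ℕ}
    (h : cumO O n (i - 1) = cumO O n i) : dd O n i = 0 :=
  Nat.eq_zero_of_le_zero (Nat.find_le (Or.inl (by omega)))

lemma del_move {O : ℕ → YoungDiagram} {n : ℕ} {l : YoungDiagram} (hO : IsOT O n l)
    {i : ℕ} {t : ℕ} (ht : t < dd O n i) :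
    YCovers (O (cumO O n (i - 1) + t + 1)) (O (cumO O n (i - 1) + t)) := by
  have hdd : dd O n i = Nat.find (ddE O n i) := rfl
  have hmin := Nat.find_min (ddE O n i) (show t < Nat.find (ddE O n i) from ht)
  push_neg at hmin
  have hddle := dd_le O n i
  have hse : cumO O n (i - 1) + t < cumO O n i := by omega
  have hnadd : ¬ IsAdd O (cumO O n (i - 1) + t + 1) := hmin.2 hse
  have hle := cumO_le (O := O) (n := n) i
  have := down_of_not_isAdd hO (m := cumO O n (i - 1) + t + 1) (by omega) (by omega) hnadd
  simpa using this

lemma add_move {O : ℕ → YoungDiagram} {n : ℕ} {l : YoungDiagram} (hO : IsOT O n l)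
    {i : ℕ} (hi : 1 ≤ i) {t : ℕ} (h1 : dd O n i ≤ t)
    (h2 : cumO O n (i - 1) + t < cumO O n i) :
    YCovers (O (cumO O n (i - 1) + t)) (O (cumO O n (i - 1) + t + 1)) := by
  have hle := cumO_le (O := O) (n := n) i
  induction t, h1 using Nat.le_induction with
  | base =>
    have hdd : dd O n i = Nat.find (ddE O n i) := rfl
    rcases Nat.find_spec (ddE O n i) with h | h
    · omega
    · have := up_of_isAdd hO (m := cumO O n (i - 1) + dd O n i + 1) (by omega)
        (by omega) h.2
      simpa using this
  | succ t h1 ih =>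
    have hprev := ih (by omega)
    by_contra hcon
    have hdown : YCovers (O (cumO O n (i - 1) + t + 1 + 1)) (O (cumO O n (i - 1) + t + 1)) := by
      rcases move_cover hO (m := cumO O n (i - 1) + t + 1 + 1) (by omega) (by omega) with hc | hc
      · exact absurd (by simpa [Nat.add_assoc] using hc) hcon
      · simpa using hc
    have hdes : IsDescent O (cumO O n (i - 1) + t + 1) := by
      left
      constructor
      · show O (cumO O n (i - 1) + t + 1 - 1) ≤ O (cumO O n (i - 1) + t + 1)
        simpa using hprev.1
      · exact down_not_isAdd (m := cumO O n (i - 1) + t + 1 + 1) (by simpa using hdown)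
    have hint := interior_not_descent (O := O) (n := n) (j := i - 1)
      (m := cumO O n (i - 1) + t + 1) (by omega) ?_
    · exact hint hdes
    · rw [show i - 1 + 1 = i by omega]
      omega

lemma card_del {O : ℕ → YoungDiagram} {n : ℕ} {l : YoungDiagram} (hO : IsOT O n l)
    {i : ℕ} : ∀ t, t ≤ dd O n i →
      (O (cumO O n (i - 1))).card = (O (cumO O n (i - 1) + t)).card + t := by
  intro t
  induction t with
  | zero => intro _; simp
  | succ t ih =>
    intro ht
    have hc := del_move hO (i := i) (t := t) (by omega)
    have := ih (by omega)
    have h2 := hc.2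
    have hidx : cumO O n (i - 1) + (t + 1) = cumO O n (i - 1) + t + 1 := rfl
    rw [hidx]
    omega

lemma card_add {O : ℕ → YoungDiagram} {n : ℕ} {l : YoungDiagram} (hO : IsOT O n l)
    {i : ℕ} (hi : 1 ≤ i) : ∀ t, dd O n i ≤ t → cumO O n (i - 1) + t ≤ cumO O n i →
      (O (cumO O n (i - 1) + t)).card
        = (O (cumO O n (i - 1) + dd O n i)).card + (t - dd O n i) := by
  intro t h1
  induction t, h1 using Nat.le_induction with
  | base => intro _; simp
  | succ t h1 ih =>
    intro ht
    have hc := add_move hO hi (i := i) (t := t) (by omega) (by omega)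
    have := ih (by omega)
    have h2 := hc.2
    have hidx : cumO O n (i - 1) + (t + 1) = cumO O n (i - 1) + t + 1 := rfl
    rw [hidx]
    omega

lemma del_chain' {O : ℕ → YoungDiagram} {n : ℕ} {l : YoungDiagram} (hO : IsOT O n l)
    {i : ℕ} {t t' : ℕ} (h1 : t ≤ t') (h2 : t' ≤ dd O n i) :
    O (cumO O n (i - 1) + t') ≤ O (cumO O n (i - 1) + t) := by
  induction t', h1 using Nat.le_induction with
  | base => exact le_refl _
  | succ t' h1 ih =>
    have hc := del_move hO (i := i) (t := t') (by omega)
    exact le_trans hc.1 (ih (by omega))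

lemma add_chain' {O : ℕ → YoungDiagram} {n : ℕ} {l : YoungDiagram} (hO : IsOT O n l)
    {i : ℕ} (hi : 1 ≤ i) {t t' : ℕ} (h0 : dd O n i ≤ t) (h1 : t ≤ t')
    (h2 : cumO O n (i - 1) + t' ≤ cumO O n i) :
    O (cumO O n (i - 1) + t) ≤ O (cumO O n (i - 1) + t') := by
  induction t', h1 using Nat.le_induction with
  | base => exact le_refl _
  | succ t' h1 ih =>
    have hc := add_move hO hi (i := i) (t := t') (by omega) (by omega)
    exact le_trans (ih (by omega)) hc.1

lemma del_boxNE {O : ℕ → YoungDiagram} {n : ℕ} {l : YoungDiagram} (hO : IsOT O n l)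
    {i : ℕ} {m : ℕ} (h1 : cumO O n (i - 1) < m) (h2 : m + 1 ≤ cumO O n (i - 1) + dd O n i) :
    ∀ B B' : ℕ × ℕ, B ∈ O (m - 1) → B ∉ O m → B' ∈ O m → B' ∉ O (m + 1) → boxNE B' B := by
  have hddle := dd_le O n i
  have hnd : ¬ IsDescent O m := by
    apply interior_not_descent (O := O) (n := n) (j := i - 1) (m := m) h1
    rcases Nat.eq_zero_or_pos i with rfl | hi
    · have h00 : cumO O n (0 - 1) = cumO O n 0 := rfl
      omega
    · rw [show i - 1 + 1 = i by omega]
      omega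
  intro B B' hB hB' hB2 hB2'
  by_contra hne
  apply hnd
  right; right
  have hdown1 : YCovers (O m) (O (m - 1)) := by
    have hc := del_move hO (i := i) (t := m - cumO O n (i - 1) - 1) (by omega)
    rw [show cumO O n (i - 1) + (m - cumO O n (i - 1) - 1) + 1 = m by omega,
      show cumO O n (i - 1) + (m - cumO O n (i - 1) - 1) = m - 1 by omega] at hc
    exact hc
  have hdown2 : YCovers (O (m + 1)) (O m) := by
    have hc := del_move hO (i := i) (t := m - cumO O n (i - 1)) (by omega)
    rw [show cumO O n (i - 1) + (m - cumO O n (i - 1)) + 1 = m + 1 by omega,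
      show cumO O n (i - 1) + (m - cumO O n (i - 1)) = m by omega] at hc
    exact hc
  exact ⟨down_not_isAdd hdown1, down_not_isAdd (m := m + 1) (by simpa using hdown2),
    B, B', hB, hB', hB2, hB2', hne⟩

lemma add_boxNE {O : ℕ → YoungDiagram} {n : ℕ} {l : YoungDiagram} (hO : IsOT O n l)
    {i : ℕ} (hi : 1 ≤ i) {m : ℕ} (h1 : cumO O n (i - 1) + dd O n i < m)
    (h2 : m + 1 ≤ cumO O n i) :
    ∀ B B' : ℕ × ℕ, B ∈ O m → B ∉ O (m - 1) → B' ∈ O (m + 1) → B' ∉ O m → boxNE B B' := by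
  have hnd : ¬ IsDescent O m := by
    apply interior_not_descent (O := O) (n := n) (j := i - 1) (m := m) (by omega)
    rw [show i - 1 + 1 = i by omega]
    omega
  intro B B' hB hB' hB2 hB2'
  by_contra hne
  apply hnd
  right; left
  have hup1 : YCovers (O (m - 1)) (O m) := by
    have hc := add_move hO hi (i := i) (t := m - cumO O n (i - 1) - 1) (by omega) (by omega)
    rw [show cumO O n (i - 1) + (m - cumO O n (i - 1) - 1) + 1 = m by omega,
      show cumO O n (i - 1) + (m - cumO O n (i - 1) - 1) = m - 1 by omega] at hc
    exact hc
  have hup2 : YCovers (O m) (O (m + 1)) := by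
    have hc := add_move hO hi (i := i) (t := m - cumO O n (i - 1)) (by omega) (by omega)
    rw [show cumO O n (i - 1) + (m - cumO O n (i - 1)) + 1 = m + 1 by omega,
      show cumO O n (i - 1) + (m - cumO O n (i - 1)) = m by omega] at hc
    exact hc
  refine ⟨hup1.1, ?_, B, B', hB, hB', hB2, hB2', hne⟩
  show O (m + 1 - 1) ≤ O (m + 1)
  simpa using hup2.1

/-! #### Strips along segments -/

lemma bot_card : (⊥ : YoungDiagram).card = 0 := by
  simp [YoungDiagram.card, YoungDiagram.cells_bot]

lemma del_cols {O : ℕ → YoungDiagram} {n : ℕ} {l : YoungDiagram} (hO : IsOT O n l)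
    {i : ℕ} : ∀ t t', cumO O n (i - 1) < t → t < t' →
      t' ≤ cumO O n (i - 1) + dd O n i →
      ∀ x y : ℕ × ℕ, x ∈ O (t - 1) → x ∉ O t → y ∈ O (t' - 1) → y ∉ O t' → y.2 < x.2 := by
  intro t t' h1 h2
  induction t', h2 using Nat.le_induction with
  | base =>
    intro h3 x y hx hx' hy hy'
    have := del_boxNE hO (i := i) (m := t) h1 h3 x y hx hx' (by simpa using hy) hy'
    exact this.2
  | succ t' h2 ih =>
    intro h3 x y hx hx' hy hy'
    have hc : YCovers (O t') (O (t' - 1)) := by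
      have hcc := del_move hO (i := i) (t := t' - cumO O n (i - 1) - 1) (by omega)
      rw [show cumO O n (i - 1) + (t' - cumO O n (i - 1) - 1) + 1 = t' by omega,
        show cumO O n (i - 1) + (t' - cumO O n (i - 1) - 1) = t' - 1 by omega] at hcc
      exact hcc
    obtain ⟨y', hy'1, hy'2⟩ := ycovers_exists hc
    have ha := ih (by omega) x y' hx hx' hy'1 hy'2
    have hb := del_boxNE hO (i := i) (m := t') (by omega) (by omega) y' y hy'1 hy'2
      (by simpa using hy) hy'
    exact lt_trans hb.2 ha

lemma add_cols {O : ℕ → YoungDiagram} {n : ℕ} {l : YoungDiagram} (hO : IsOT O n l)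
    {i : ℕ} (hi : 1 ≤ i) : ∀ t t', cumO O n (i - 1) + dd O n i < t → t < t' →
      t' ≤ cumO O n i →
      ∀ x y : ℕ × ℕ, x ∈ O t → x ∉ O (t - 1) → y ∈ O t' → y ∉ O (t' - 1) → x.2 < y.2 := by
  intro t t' h1 h2
  induction t', h2 using Nat.le_induction with
  | base =>
    intro h3 x y hx hx' hy hy'
    have := add_boxNE hO hi (i := i) (m := t) h1 h3 x y hx hx' hy (by simpa using hy')
    exact this.2
  | succ t' h2 ih =>
    intro h3 x y hx hx' hy hy'
    have hc : YCovers (O (t' - 1)) (O t') := by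
      have hcc := add_move hO hi (i := i) (t := t' - cumO O n (i - 1) - 1) (by omega)
        (by omega)
      rw [show cumO O n (i - 1) + (t' - cumO O n (i - 1) - 1) + 1 = t' by omega,
        show cumO O n (i - 1) + (t' - cumO O n (i - 1) - 1) = t' - 1 by omega] at hcc
      exact hcc
    obtain ⟨y', hy'1, hy'2⟩ := ycovers_exists hc
    have ha := ih (by omega) x y' hx hx' hy'1 hy'2
    have hb := add_boxNE hO hi (i := i) (m := t') (by omega) (by omega) y' y hy'1 hy'2
      (by simpa using hy) (by simpa using hy')
    exact lt_trans ha hb.2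

lemma strip_del_seg {O : ℕ → YoungDiagram} {n : ℕ} {l : YoungDiagram} (hO : IsOT O n l)
    {i : ℕ} :
    HStrip (O (cumO O n (i - 1) + dd O n i)) (O (cumO O n (i - 1))) := by
  constructor
  · have := del_chain' hO (i := i) (t := 0) (t' := dd O n i) (by omega) (le_refl _)
    simpa using this
  · intro i₁ i₂ j hx hx' hy hy'
    obtain ⟨t, ht1, ht2, ht3, ht4⟩ := exists_exit (f := O) (a := cumO O n (i - 1))
      (b := cumO O n (i - 1) + dd O n i) (by omega) hx hx'
    obtain ⟨t', ht1', ht2', ht3', ht4'⟩ := exists_exit (f := O) (a := cumO O n (i - 1))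
      (b := cumO O n (i - 1) + dd O n i) (by omega) hy hy'
    rcases lt_trichotomy t t' with h | h | h
    · have := del_cols hO (i := i) t t' ht1 h ht2' _ _ ht3 ht4 ht3' ht4'
      simp at this
    · subst h
      have hc : YCovers (O t) (O (t - 1)) := by
        have hcc := del_move hO (i := i) (t := t - cumO O n (i - 1) - 1) (by omega)
        rw [show cumO O n (i - 1) + (t - cumO O n (i - 1) - 1) + 1 = t by omega,
          show cumO O n (i - 1) + (t - cumO O n (i - 1) - 1) = t - 1 by omega] at hcc
        exact hcc
      have := ycovers_box_unique hc _ _ ht3 ht4 ht3' ht4'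
      simpa using this
    · have := del_cols hO (i := i) t' t ht1' h ht2 _ _ ht3' ht4' ht3 ht4
      simp at this

lemma strip_add_seg {O : ℕ → YoungDiagram} {n : ℕ} {l : YoungDiagram} (hO : IsOT O n l)
    {i : ℕ} (hi : 1 ≤ i) :
    HStrip (O (cumO O n (i - 1) + dd O n i)) (O (cumO O n i)) := by
  have hddle := dd_le O n i
  have hmono := cumO_mono O n (show i - 1 ≤ i by omega)
  constructor
  · have := add_chain' hO hi (i := i) (t := dd O n i)
      (t' := cumO O n i - cumO O n (i - 1)) (le_refl _) (by omega) (by omega)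
    rw [show cumO O n (i - 1) + (cumO O n i - cumO O n (i - 1)) = cumO O n i by omega]
      at this
    exact this
  · intro i₁ i₂ j hx hx' hy hy'
    obtain ⟨t, ht1, ht2, ht3, ht4⟩ := exists_entry (f := O) (a := cumO O n (i - 1) + dd O n i)
      (b := cumO O n i) (by omega) hx' hx
    obtain ⟨t', ht1', ht2', ht3', ht4'⟩ := exists_entry (f := O)
      (a := cumO O n (i - 1) + dd O n i) (b := cumO O n i) (by omega) hy' hy
    rcases lt_trichotomy t t' with h | h | h
    · have := add_cols hO hi (i := i) t t' ht1 h ht2' _ _ ht4 ht3 ht4' ht3'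
      simp at this
    · subst h
      have hc : YCovers (O (t - 1)) (O t) := by
        have hcc := add_move hO hi (i := i) (t := t - cumO O n (i - 1) - 1) (by omega)
          (by omega)
        rw [show cumO O n (i - 1) + (t - cumO O n (i - 1) - 1) + 1 = t by omega,
          show cumO O n (i - 1) + (t - cumO O n (i - 1) - 1) = t - 1 by omega] at hcc
        exact hcc
      have := ycovers_box_unique hc _ _ ht4 ht3 ht4' ht3'
      simpa using this
    · have := add_cols hO hi (i := i) t' t ht1' h ht2 _ _ ht4' ht3' ht4 ht3
      simp at this

lemma dd_one {O : ℕ → YoungDiagram} {n : ℕ} {l : YoungDiagram} (hO : IsOT O n l) :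
    dd O n 1 = 0 := by
  by_contra h
  have hc := del_move hO (i := 1) (t := 0) (by omega)
  have h2 := hc.2
  have he : cumO O n (1 - 1) + 0 = 0 := rfl
  rw [he, hO.1] at h2
  rw [bot_card] at h2
  omega

/-! #### The destandardized SSOT -/

def dstA (O : ℕ → YoungDiagram) (n : ℕ) (i : ℕ) : YoungDiagram := O (cumO O n i)

def dstD (O : ℕ → YoungDiagram) (n : ℕ) (i : ℕ) : YoungDiagram :=
  if i ≤ 1 then ⊥ else O (cumO O n (i - 1) + dd O n i)

lemma card_cumO {O : ℕ → YoungDiagram} {n : ℕ} {l : YoungDiagram} (hO : IsOT O n l)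
    {i : ℕ} (hi : 1 ≤ i) :
    (O (cumO O n i)).card
      = (O (cumO O n (i - 1) + dd O n i)).card
        + (cumO O n i - cumO O n (i - 1) - dd O n i) := by
  have hddle := dd_le O n i
  have hmono := cumO_mono O n (show i - 1 ≤ i by omega)
  have hca := card_add hO hi (cumO O n i - cumO O n (i - 1)) (by omega) (by omega)
  rw [show cumO O n (i - 1) + (cumO O n i - cumO O n (i - 1)) = cumO O n i by omega] at hca
  omega

/-- The destandardization of an oscillating tableau. -/
def dstS {O : ℕ → YoungDiagram} {n : ℕ} {l : YoungDiagram} (hO : IsOT O n l) : SSOT where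
  steps := (desComp O n).length
  A := dstA O n
  D := dstD O n
  hA0 := by
    show O (cumO O n 0) = ⊥
    rw [cumO_zero, hO.1]
  hD0 := by simp [dstD]
  hD1 := by simp [dstD]
  stableA := fun i hi => by
    show O (cumO O n i) = O (cumO O n _)
    rw [cumO_stable O n hi]
  stableD := fun i hi => by
    show dstD O n i = dstA O n (desComp O n).length
    rcases le_or_gt i 1 with h1 | h1
    · have hk : (desComp O n).length = 0 := by omega
      simp only [dstD, if_pos h1, dstA, hk, cumO_zero, hO.1]
    · simp only [dstD, if_neg (by omega : ¬ i ≤ 1), dstA]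
      have e1 : cumO O n (i - 1) = cumO O n (desComp O n).length :=
        cumO_stable O n (by omega)
      have e2 : cumO O n i = cumO O n (desComp O n).length := cumO_stable O n (by omega)
      have hdd : dd O n i = 0 := dd_zero (by rw [e1, e2])
      rw [hdd, Nat.add_zero, e1]
  strip_del := fun i hi => by
    show HStrip (dstD O n (i + 1)) (dstA O n i)
    simp only [dstD, if_neg (by omega : ¬ i + 1 ≤ 1), dstA]
    rcases le_or_gt (i + 1) (desComp O n).length with hik | hik
    · have h := strip_del_seg hO (i := i + 1) (n := n)
      simp only [Nat.add_sub_cancel] at h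
      exact h
    · have e1 : cumO O n (i + 1 - 1) = cumO O n (i + 1) := by
        rw [cumO_stable'' (i + 1 - 1) (by omega), cumO_stable'' (i + 1) (by omega)]
      rw [dd_zero e1, Nat.add_zero]
      simp only [Nat.add_sub_cancel]
      exact HStrip.refl _
  strip_add := fun i hi => by
    show HStrip (dstD O n i) (dstA O n i)
    simp only [dstD, if_neg (by omega : ¬ i ≤ 1), dstA]
    rcases le_or_gt i (desComp O n).length with hik | hik
    · exact strip_add_seg hO (by omega)
    · have e1 : cumO O n (i - 1) = cumO O n i := by
        rw [cumO_stable'' (i - 1) (by omega), cumO_stable'' i (by omega)]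
      rw [dd_zero e1, Nat.add_zero, e1]
      exact HStrip.refl _
  minimal := by
    intro hk hcon
    obtain ⟨hDA, hAA⟩ := hcon
    set k := (desComp O n).length with hkdef
    have hAA' : O (cumO O n k) = O (cumO O n (k - 1)) := hAA
    have hstrict : cumO O n (k - 1) < cumO O n k := by
      have := cumO_strict (O := O) (n := n) (j := k - 1) (by omega)
      rw [show k - 1 + 1 = k by omega] at this
      exact this
    have hddle := dd_le O n k
    have hcd := card_del hO (i := k) (dd O n k) (le_refl _)
    have hca := card_cumO hO (i := k) (by omega)
    have hcAA := congrArg YoungDiagram.card hAA'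
    rcases le_or_gt k 1 with h1 | h1
    · have hk1 : k = 1 := by omega
      have hbot : dstD O n k = ⊥ := by rw [hk1]; simp [dstD]
      have hDbot : dstA O n k = ⊥ := by rw [← hDA, hbot]
      have hcard0 : (O (cumO O n k)).card = 0 := by
        have := congrArg YoungDiagram.card hDbot
        rw [bot_card] at this
        exact this
      have hcards : (O (cumO O n (k - 1))).card = 0 := by
        have hz : cumO O n (k - 1) = 0 := by
          rw [hk1]
          rfl
        rw [hz, hO.1, bot_card]
      omega
    · have hDA' : O (cumO O n (k - 1) + dd O n k) = O (cumO O n k) := by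
        have := hDA
        simp only [dstD, if_neg (by omega : ¬ k ≤ 1), dstA] at this
        exact this
      have hcDA := congrArg YoungDiagram.card hDA'
      omega

lemma dstS_steps {O : ℕ → YoungDiagram} {n : ℕ} {l : YoungDiagram} (hO : IsOT O n l) :
    (dstS hO).steps = (desComp O n).length := rfl

lemma dstS_delc {O : ℕ → YoungDiagram} {n : ℕ} {l : YoungDiagram} (hO : IsOT O n l)
    (i : ℕ) (hi : 1 ≤ i) : (dstS hO).delc i = dd O n i := by
  show (dstA O n (i - 1)).card - (dstD O n i).card = dd O n i
  rcases le_or_gt i 1 with h1 | h1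
  · have hi1 : i = 1 := by omega
    subst hi1
    simp only [dstD, if_pos (le_refl 1), dstA, bot_card]
    rw [show cumO O n (1 - 1) = 0 from rfl, hO.1, bot_card, dd_one hO]
  · rcases le_or_gt i (desComp O n).length with hik | hik
    · have hcd := card_del hO (i := i) (dd O n i) (le_refl _)
      simp only [dstD, if_neg (by omega : ¬ i ≤ 1), dstA]
      omega
    · have e1 : cumO O n (i - 1) = cumO O n i := by
        rw [cumO_stable'' (i - 1) (by omega), cumO_stable'' i (by omega)]
      have hdd := dd_zero e1
      simp only [dstD, if_neg (by omega : ¬ i ≤ 1), dstA, hdd, Nat.add_zero, e1]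
      omega

lemma dstS_Dcard {O : ℕ → YoungDiagram} {n : ℕ} {l : YoungDiagram} (hO : IsOT O n l)
    (i : ℕ) (hi : 1 ≤ i) :
    (dstD O n i).card = (O (cumO O n (i - 1) + dd O n i)).card := by
  rcases le_or_gt i 1 with h1 | h1
  · have hi1 : i = 1 := by omega
    subst hi1
    simp only [dstD, if_pos (le_refl 1), bot_card]
    rw [dd_one hO, show cumO O n (1 - 1) + 0 = 0 from rfl, hO.1, bot_card]
  · simp only [dstD, if_neg (by omega : ¬ i ≤ 1)]

lemma dstS_mult {O : ℕ → YoungDiagram} {n : ℕ} {l : YoungDiagram} (hO : IsOT O n l)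
    (i : ℕ) (hi : 1 ≤ i) :
    (dstS hO).mult i = cumO O n i - cumO O n (i - 1) := by
  rw [SSOT.mult, if_neg (by omega)]
  show ((dstA O n (i - 1)).card - (dstD O n i).card)
    + ((dstA O n i).card - (dstD O n i).card) = _
  have hDc := dstS_Dcard hO i hi
  have hcd := card_del hO (i := i) (dd O n i) (le_refl _)
  have hca := card_cumO hO (i := i) hi
  have hddle := dd_le O n i
  have hmono := cumO_mono O n (show i - 1 ≤ i by omega)
  simp only [dstA]
  omega

lemma dstS_cum {O : ℕ → YoungDiagram} {n : ℕ} {l : YoungDiagram} (hO : IsOT O n l)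
    (i : ℕ) : (dstS hO).cum i = cumO O n i := by
  induction i with
  | zero => rw [SSOT.cum_zero, cumO_zero]
  | succ i ih =>
    rw [SSOT.cum_succ, ih, dstS_mult hO (i + 1) (by omega)]
    have h1 : cumO O n (i + 1 - 1) = cumO O n i := rfl
    have h2 := cumO_mono O n (show i ≤ i + 1 by omega)
    omega

lemma dstS_length {O : ℕ → YoungDiagram} {n : ℕ} {l : YoungDiagram} (hO : IsOT O n l) :
    (dstS hO).length = n := by
  have h := dstS_cum hO ((dstS hO).steps)
  rw [SSOT.cum_steps] at h
  rw [h]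
  exact cumO_length

lemma dstS_shape {O : ℕ → YoungDiagram} {n : ℕ} {l : YoungDiagram} (hO : IsOT O n l) :
    (dstS hO).shape = l := by
  show dstA O n (desComp O n).length = l
  simp only [dstA]
  rw [cumO_length]
  exact hO.2.1 n (le_refl _)

lemma dstS_isStd {O : ℕ → YoungDiagram} {n : ℕ} {l : YoungDiagram} (hO : IsOT O n l) :
    IsStd (dstS hO) O := by
  have hcum := dstS_cum hO
  have hdelc := dstS_delc hO
  refine ⟨?_, ?_, ?_, ?_, ?_, ?_, ?_⟩
  · intro j hj
    rw [dstS_length hO] at hj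
    rw [dstS_shape hO]
    exact hO.2.1 j hj
  · intro i
    rw [hcum]
    rfl
  · intro i hi
    rw [hcum, hdelc i hi]
    rcases le_or_gt i 1 with h1 | h1
    · have hi1 : i = 1 := by omega
      subst hi1
      show O (cumO O n (1 - 1) + dd O n 1) = dstD O n 1
      rw [dd_one hO, show cumO O n (1 - 1) + 0 = 0 from rfl, hO.1]
      simp [dstD]
    · show O (cumO O n (i - 1) + dd O n i) = dstD O n i
      simp only [dstD, if_neg (by omega : ¬ i ≤ 1)]
  · intro i m hi h1 h2
    rw [hcum] at h1
    rw [hcum, hdelc i hi] at h2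
    have hc := del_move hO (i := i) (t := m - cumO O n (i - 1) - 1) (by omega)
    rw [show cumO O n (i - 1) + (m - cumO O n (i - 1) - 1) + 1 = m by omega,
      show cumO O n (i - 1) + (m - cumO O n (i - 1) - 1) = m - 1 by omega] at hc
    exact hc
  · intro i m hi h1 h2
    rw [hcum, hdelc i hi] at h1
    rw [hcum] at h2
    have hc := add_move hO hi (i := i) (t := m - cumO O n (i - 1) - 1) (by omega) (by omega)
    rw [show cumO O n (i - 1) + (m - cumO O n (i - 1) - 1) + 1 = m by omega,
      show cumO O n (i - 1) + (m - cumO O n (i - 1) - 1) = m - 1 by omega] at hc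
    exact hc
  · intro i m hi h1 h2
    rw [hcum] at h1
    rw [hcum, hdelc i hi] at h2
    exact del_boxNE hO (i := i) h1 h2
  · intro i m hi h1 h2
    rw [hcum, hdelc i hi] at h1
    rw [hcum] at h2
    exact add_boxNE hO hi h1 h2

lemma dstS_comList {O : ℕ → YoungDiagram} {n : ℕ} {l : YoungDiagram} (hO : IsOT O n l) :
    (dstS hO).comList = desComp O n := by
  apply List.ext_getElem
  · rw [SSOT.comList_length]
    rfl
  · intro j hj1 hj2
    have hj : j < (desComp O n).length := hj2
    have hmult := dstS_mult hO (j + 1) (by omega)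
    have hcs := cumO_succ O n j
    have hmono := cumO_mono O n (show j ≤ j + 1 by omega)
    have hgd : (desComp O n).getD j 0 = (desComp O n)[j] := List.getD_eq_getElem _ _ hj
    have hcl : (dstS hO).comList[j] = (dstS hO).mult (j + 1) := by
      simp [SSOT.comList]
    rw [hcl, hmult]
    have h1 : cumO O n (j + 1 - 1) = cumO O n j := rfl
    omega

lemma dstS_isQY {O : ℕ → YoungDiagram} {n : ℕ} {l : YoungDiagram} (hO : IsOT O n l) :
    IsQY (dstS hO) := by
  refine ⟨O, dstS_isStd hO, ?_⟩
  rw [dstS_comList hO, dstS_length hO]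

/-! #### Assembly -/

/-- The destandardization map, as a map between the two subtypes. -/
def dstFun (l : YoungDiagram) (n : ℕ) :
    {O : ℕ → YoungDiagram // IsOT O n l} →
      {S : SSOT // S.shape = l ∧ S.length = n ∧ IsQY S} :=
  fun O' => ⟨dstS O'.2, dstS_shape O'.2, dstS_length O'.2, dstS_isQY O'.2⟩

lemma dstFun_bijective (l : YoungDiagram) (n : ℕ) : Function.Bijective (dstFun l n) := by
  constructor
  · intro O₁ O₂ hg
    apply Subtype.ext
    have h₁ : IsStd (dstS O₁.2) O₁.1 := dstS_isStd O₁.2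
    have h₂ : IsStd (dstS O₂.2) O₂.1 := dstS_isStd O₂.2
    have hval : dstS O₁.2 = dstS O₂.2 := congrArg Subtype.val hg
    rw [hval] at h₁
    exact isStd_unique h₁ h₂
  · intro S
    obtain ⟨hshape, hlen, hqy⟩ := S.2
    obtain ⟨O', hstd, hcom⟩ := hqy
    have hOT : IsOT O' n l := by
      have h := hstd.isOT
      rw [hlen, hshape] at h
      exact h
    refine ⟨⟨O', hOT⟩, ?_⟩
    apply Subtype.ext
    exact qy_unique (dstS_isQY hOT) ⟨O', hstd, hcom⟩
      ((dstS_length hOT).trans hlen.symm) (dstS_isStd hOT) hstd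

end StdAux

/-- **Standardization–destandardization.**  The standardization map, restricted to
quasi-Yamanouchi SSOTs, is a bijection from `QYOT_n(λ)` onto `OT_n(λ)` which preserves the
descent composition and the number of steps; its inverse is the destandardization map
`dst`, sending an SSOT to the unique quasi-Yamanouchi SSOT with the same standardization. -/
theorem std_bijection_QYOT_OT (l : YoungDiagram) (n : ℕ) :
    ∃ Φ : {S : SSOT // S.shape = l ∧ S.length = n ∧ IsQY S} ≃
          {O : ℕ → YoungDiagram // IsOT O n l},
      (∀ S, IsStd S.1 (Φ S).1) ∧
      (∀ S, S.1.comList = desComp (Φ S).1 n) ∧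
      (∀ S, S.1.steps = (desComp (Φ S).1 n).length) ∧
      (∀ (O : {O : ℕ → YoungDiagram // IsOT O n l}) (S : SSOT),
        S.shape = l → S.length = n → IsQY S → IsStd S O.1 → S = (Φ.symm O).1) := by
  set e := Equiv.ofBijective (dstFun l n) (dstFun_bijective l n) with hedef
  refine ⟨e.symm, ?_, ?_, ?_, ?_⟩
  · intro S
    have hg : (e (e.symm S)).1 = S.1 := congrArg Subtype.val (e.apply_symm_apply S)
    have hg' : dstS (e.symm S).2 = S.1 := hg
    rw [← hg']
    exact dstS_isStd (e.symm S).2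
  · intro S
    have hg : (e (e.symm S)).1 = S.1 := congrArg Subtype.val (e.apply_symm_apply S)
    have hg' : dstS (e.symm S).2 = S.1 := hg
    rw [← hg']
    exact dstS_comList (e.symm S).2
  · intro S
    have hg : (e (e.symm S)).1 = S.1 := congrArg Subtype.val (e.apply_symm_apply S)
    have hg' : dstS (e.symm S).2 = S.1 := hg
    rw [← hg']
    rfl
  · intro O S hsh hlen hqy hstd
    show S = (dstS O.2 : SSOT)
    exact qy_unique hqy (dstS_isQY O.2) (hlen.trans (dstS_length O.2).symm) hstd
      (dstS_isStd O.2)
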